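/- arXiv:math/0405024 — 2 statements merged into one kernel-verified Lean document; each statement's English description precedes it below -/
import Mathlib

section
/- For every P ∈ ℝ^m and all ξ, η ∈ ℝ^m, the Ricci tensor Ric_P(ξ, η) := trace(ζ ↦ 𝓡_P(ζ, ξ)η) vanishes; that is, M_{2p+6,f} is Ricci flat. -/
/- Setting of Gilkey–Nikčević: m = 2p+6, coordinates
   (x, y, z_0, …, z_p, x̄, ȳ, z̄_0, …, z̄_p) on ℝ^m. -/

/-- The model space ℝ^{2p+6}. -/
abbrev Vp (p : ℕ) := Fin (2*p+6) → ℝ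

/-- index of the coordinate x -/
def ix (p : ℕ) : Fin (2*p+6) := ⟨0, by omega⟩
/-- index of the coordinate y -/
def iy (p : ℕ) : Fin (2*p+6) := ⟨1, by omega⟩
/-- index of the coordinate z_i -/
def iz (p : ℕ) (i : Fin (p+1)) : Fin (2*p+6) := ⟨2 + i.1, by have := i.2; omega⟩
/-- index of the coordinate x̄ -/
def ixb (p : ℕ) : Fin (2*p+6) := ⟨p+3, by omega⟩
/-- index of the coordinate ȳ -/
def iyb (p : ℕ) : Fin (2*p+6) := ⟨p+4, by omega⟩
/-- index of the coordinate z̄_i -/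
def izb (p : ℕ) (i : Fin (p+1)) : Fin (2*p+6) := ⟨p+5+i.1, by have := i.2; omega⟩

/-- F(y, z⃗) = f(y) + Σ_{i=0}^p y^{i+1} z_i, evaluated at the coordinates of the point P. -/
noncomputable def FF (p : ℕ) (f : ℝ → ℝ) (P : Vp p) : ℝ :=
  f (P (iy p)) + ∑ i : Fin (p+1), (P (iy p))^(i.1+1) * P (iz p i)

/-- The symmetric bilinear form g_P on ℝ^{2p+6}: the only nonzero components on
basis vectors are g(∂x,∂x̄)=g(∂y,∂ȳ)=g(∂z_i,∂z̄_i)=1 and g(∂x,∂x) = -2F(y,z⃗). -/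
noncomputable def gP (p : ℕ) (f : ℝ → ℝ) (P : Vp p) (u v : Vp p) : ℝ :=
  u (ix p) * v (ixb p) + u (ixb p) * v (ix p)
  + u (iy p) * v (iyb p) + u (iyb p) * v (iy p)
  + ∑ i : Fin (p+1), (u (iz p i) * v (izb p i) + u (izb p i) * v (iz p i))
  - 2 * FF p f P * (u (ix p) * v (ix p))

/-- wedge component: (u ∧ v)_{ab} = u_a v_b - u_b v_a. -/
def wdg (p : ℕ) (a b : Fin (2*p+6)) (u v : Vp p) : ℝ := u a * v b - u b * v a

/-- The (4+k)-linear form ∇^kR_P on ℝ^{2p+6}: it is antisymmetric in arguments 1,2 and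
in arguments 3,4, symmetric under interchanging the pair (1,2) with the pair (3,4),
and its only nonzero components on basis vectors up to these symmetries are
∇^kR_P(∂x,∂y,∂y,∂x;∂y,…,∂y) = f^{(k+2)}(y) + Σ_i (d/dy)^{k+2}(y^{i+1})·z_i,
∇^kR_P(∂x,∂y,∂z_i,∂x;∂y,…,∂y) = (d/dy)^{k+1}(y^{i+1}), and
∇^kR_P(∂x,∂y,∂y,∂x;∂y,…,∂z_i,…,∂y) = (d/dy)^{k+1}(y^{i+1}) (∂z_i in one derivative slot).
This `def` is the unique multilinear map with these components, written out explicitly. -/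
noncomputable def nR (p : ℕ) (f : ℝ → ℝ) (k : ℕ) (P : Vp p)
    (ξ₁ ξ₂ ξ₃ ξ₄ : Vp p) (η : Fin k → Vp p) : ℝ :=
  -(wdg p (ix p) (iy p) ξ₁ ξ₂ * wdg p (ix p) (iy p) ξ₃ ξ₄) *
    ((iteratedDeriv (k+2) f (P (iy p))
        + ∑ i : Fin (p+1), iteratedDeriv (k+2) (fun t => t^(i.1+1)) (P (iy p)) * P (iz p i))
        * ∏ j : Fin k, η j (iy p)
      + ∑ i : Fin (p+1), iteratedDeriv (k+1) (fun t => t^(i.1+1)) (P (iy p)) *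
          ∑ j : Fin k, η j (iz p i) * ∏ l ∈ Finset.univ.erase j, η l (iy p))
  - (∑ i : Fin (p+1), iteratedDeriv (k+1) (fun t => t^(i.1+1)) (P (iy p)) *
      (wdg p (ix p) (iy p) ξ₁ ξ₂ * wdg p (ix p) (iz p i) ξ₃ ξ₄
        + wdg p (ix p) (iz p i) ξ₁ ξ₂ * wdg p (ix p) (iy p) ξ₃ ξ₄)) * ∏ j : Fin k, η j (iy p)

section AuxRicci

@[simp] lemma ix_val (p : ℕ) : (ix p).1 = 0 := by simp [ix]
@[simp] lemma iy_val (p : ℕ) : (iy p).1 = 1 := by simp [iy]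
@[simp] lemma iz_val (p : ℕ) (i : Fin (p+1)) : (iz p i).1 = 2 + i.1 := by simp [iz]
@[simp] lemma ixb_val (p : ℕ) : (ixb p).1 = p + 3 := by simp [ixb]
@[simp] lemma iyb_val (p : ℕ) : (iyb p).1 = p + 4 := by simp [iyb]
@[simp] lemma izb_val (p : ℕ) (i : Fin (p+1)) : (izb p i).1 = p + 5 + i.1 := by simp [izb]

lemma single_app {p : ℕ} (b a : Fin (2*p+6)) :
    (Pi.single b (1:ℝ) : Vp p) a = if a.1 = b.1 then 1 else 0 := by
  simp [Pi.single_apply, Fin.ext_iff]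

lemma nR_zero_right (p : ℕ) (f : ℝ → ℝ) (P ξ₁ ξ₂ ξ₃ v : Vp p)
    (h1 : v (ix p) = 0) (h2 : v (iy p) = 0) (h3 : ∀ i, v (iz p i) = 0) :
    nR p f 0 P ξ₁ ξ₂ ξ₃ v (fun j => j.elim0) = 0 := by
  simp [nR, wdg, h1, h2, h3]

lemma nR_zero_left (p : ℕ) (f : ℝ → ℝ) (P ξ₁ ξ₂ ξ₃ ξ₄ : Vp p)
    (h1 : ξ₁ (ix p) = 0) (h2 : ξ₁ (iy p) = 0) (h3 : ∀ i, ξ₁ (iz p i) = 0) :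
    nR p f 0 P ξ₁ ξ₂ ξ₃ ξ₄ (fun j => j.elim0) = 0 := by
  simp [nR, wdg, h1, h2, h3]

lemma gP_single_ixb (p : ℕ) (f : ℝ → ℝ) (P u : Vp p) :
    gP p f P u (Pi.single (ixb p) 1) = u (ix p) := by
  unfold gP
  rw [Finset.sum_eq_zero (fun i (_ : i ∈ Finset.univ) => by
    have hi := i.2
    simp only [single_app, iz_val, izb_val, ixb_val]
    rw [if_neg (by omega), if_neg (by omega)]; ring)]
  simp only [single_app, ix_val, iy_val, ixb_val, iyb_val]
  split_ifs <;> first | ring1 | (exfalso; omega) | simp_all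

lemma gP_single_iyb (p : ℕ) (f : ℝ → ℝ) (P u : Vp p) :
    gP p f P u (Pi.single (iyb p) 1) = u (iy p) := by
  unfold gP
  rw [Finset.sum_eq_zero (fun i (_ : i ∈ Finset.univ) => by
    have hi := i.2
    simp only [single_app, iz_val, izb_val, iyb_val]
    rw [if_neg (by omega), if_neg (by omega)]; ring)]
  simp only [single_app, ix_val, iy_val, ixb_val, iyb_val]
  split_ifs <;> first | ring1 | (exfalso; omega) | simp_all

lemma gP_single_izb (p : ℕ) (f : ℝ → ℝ) (P u : Vp p) (j : Fin (p+1)) :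
    gP p f P u (Pi.single (izb p j) 1) = u (iz p j) := by
  unfold gP
  rw [Finset.sum_eq_single_of_mem j (Finset.mem_univ j) (fun i _ hij => by
    have hi := i.2
    have hij' : i.1 ≠ j.1 := fun hh => hij (Fin.ext hh)
    simp only [single_app, iz_val, izb_val]
    rw [if_neg (by omega), if_neg (by omega)]; ring)]
  have hj := j.2
  simp only [single_app, ix_val, iy_val, iz_val, ixb_val, iyb_val, izb_val]
  split_ifs <;> first | ring1 | (exfalso; omega) | simp_all

lemma gP_single_ix (p : ℕ) (f : ℝ → ℝ) (P u : Vp p) :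
    gP p f P u (Pi.single (ix p) 1) = u (ixb p) - 2 * FF p f P * u (ix p) := by
  unfold gP
  rw [Finset.sum_eq_zero (fun i (_ : i ∈ Finset.univ) => by
    have hi := i.2
    simp only [single_app, iz_val, izb_val, ix_val]
    rw [if_neg (by omega), if_neg (by omega)]; ring)]
  simp only [single_app, ix_val, iy_val, ixb_val, iyb_val]
  split_ifs <;> first | ring1 | (exfalso; omega) | simp_all

lemma gP_single_iy (p : ℕ) (f : ℝ → ℝ) (P u : Vp p) :
    gP p f P u (Pi.single (iy p) 1) = u (iyb p) := by
  unfold gP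
  rw [Finset.sum_eq_zero (fun i (_ : i ∈ Finset.univ) => by
    have hi := i.2
    simp only [single_app, iz_val, izb_val, iy_val]
    rw [if_neg (by omega), if_neg (by omega)]; ring)]
  simp only [single_app, ix_val, iy_val, ixb_val, iyb_val]
  split_ifs <;> first | ring1 | (exfalso; omega) | simp_all

lemma gP_single_iz (p : ℕ) (f : ℝ → ℝ) (P u : Vp p) (j : Fin (p+1)) :
    gP p f P u (Pi.single (iz p j) 1) = u (izb p j) := by
  unfold gP
  rw [Finset.sum_eq_single_of_mem j (Finset.mem_univ j) (fun i _ hij => by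
    have hi := i.2
    have hij' : i.1 ≠ j.1 := fun hh => hij (Fin.ext hh)
    simp only [single_app, iz_val, izb_val]
    rw [if_neg (by omega), if_neg (by omega)]; ring)]
  have hj := j.2
  simp only [single_app, ix_val, iy_val, iz_val, ixb_val, iyb_val, izb_val]
  split_ifs <;> first | ring1 | (exfalso; omega) | simp_all

end AuxRicci

/-- M_{2p+6,f} is Ricci flat: if 𝓡_P is the (unique) curvature operator
with g_P(𝓡_P(ξ₁,ξ₂)ξ₃, ξ₄) = R_P(ξ₁,ξ₂,ξ₃,ξ₄), then the Ricci tensor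
Ric_P(ξ,η) = trace(ζ ↦ 𝓡_P(ζ,ξ)η), computed here as the sum of the diagonal entries
in the standard basis, vanishes. -/

theorem Ricci_flat (p : ℕ) (f : ℝ → ℝ) (hf : ContDiff ℝ (⊤ : ℕ∞) f)
    (P : Vp p) (curvOp : Vp p → Vp p → Vp p → Vp p)
    (hcurv : ∀ ξ₁ ξ₂ ξ₃ ξ₄ : Vp p,
      gP p f P (curvOp ξ₁ ξ₂ ξ₃) ξ₄ = nR p f 0 P ξ₁ ξ₂ ξ₃ ξ₄ (fun j => j.elim0)) :
    ∀ ξ η : Vp p, ∑ a : Fin (2*p+6), curvOp (Pi.single a 1) ξ η a = 0 := by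
  intro ξ η
  apply Finset.sum_eq_zero
  intro a _
  have hg : ∀ v, gP p f P (curvOp (Pi.single a 1) ξ η) v
      = nR p f 0 P (Pi.single a 1) ξ η v (fun j => j.elim0) := fun v => hcurv _ _ _ _
  set u := curvOp (Pi.single a 1) ξ η with hu
  by_cases hbar : (a : ℕ) < p + 3
  · -- unbarred index
    have key : ∀ b : Fin (2*p+6), p + 3 ≤ (b : ℕ) → gP p f P u (Pi.single b 1) = 0 := by
      intro b hb
      rw [hg]
      refine nR_zero_right _ _ _ _ _ _ _ ?_ ?_ ?_
      · rw [single_app]; rw [if_neg (by simp only [ix_val]; omega)]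
      · rw [single_app]; rw [if_neg (by simp only [iy_val]; omega)]
      · intro i
        have hi := i.2
        rw [single_app]; rw [if_neg (by simp only [iz_val]; omega)]
    have hcases : a = ix p ∨ a = iy p ∨ ∃ i, a = iz p i := by
      by_cases h0 : (a : ℕ) = 0
      · exact Or.inl (Fin.ext (by simpa using h0))
      by_cases h1 : (a : ℕ) = 1
      · exact Or.inr (Or.inl (Fin.ext (by simpa using h1)))
      · exact Or.inr (Or.inr ⟨⟨(a : ℕ) - 2, by omega⟩, Fin.ext (by simp; omega)⟩)
    rcases hcases with h | h | ⟨i, h⟩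
    · rw [h, ← gP_single_ixb p f P u]
      exact key _ (by simp only [ixb_val]; omega)
    · rw [h, ← gP_single_iyb p f P u]
      exact key _ (by simp only [iyb_val]; omega)
    · rw [h, ← gP_single_izb p f P u i]
      exact key _ (by simp only [izb_val]; omega)
  · -- barred index
    have hz : ∀ v, gP p f P u v = 0 := by
      intro v
      rw [hg]
      refine nR_zero_left _ _ _ _ _ _ _ ?_ ?_ ?_
      · rw [single_app]; rw [if_neg (by simp only [ix_val]; omega)]
      · rw [single_app]; rw [if_neg (by simp only [iy_val]; omega)]
      · intro i
        have hi := i.2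
        rw [single_app]; rw [if_neg (by simp only [iz_val]; omega)]
    have hax : u (ix p) = 0 := by rw [← gP_single_ixb p f P u]; exact hz _
    have haxb : u (ixb p) = 0 := by
      have := hz (Pi.single (ix p) 1)
      rw [gP_single_ix p f P u] at this
      rw [hax] at this; linarith
    have hcases : a = ixb p ∨ a = iyb p ∨ ∃ i, a = izb p i := by
      have ha := a.2
      by_cases h0 : (a : ℕ) = p + 3
      · exact Or.inl (Fin.ext (by simpa using h0))
      by_cases h1 : (a : ℕ) = p + 4
      · exact Or.inr (Or.inl (Fin.ext (by simpa using h1)))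
      · exact Or.inr (Or.inr ⟨⟨(a : ℕ) - (p + 5), by omega⟩, Fin.ext (by simp; omega)⟩)
    rcases hcases with h | h | ⟨i, h⟩
    · rw [h]; exact haxb
    · rw [h, ← gP_single_iy p f P u]; exact hz _
    · rw [h, ← gP_single_iz p f P u i]; exact hz _
end

section
/- Let h be any positive-definite inner product on ℝ^m. Let P ∈ ℝ^m have y-coordinate y, assume f^{(p+4)}(y) ≠ 0, and let X = a∂x + b∂y and Y = c∂x + d∂y be such that J_{p+1,P}(Y)X ≠ 0. Then h(J_{p+1,P}(Y)X, J_{p+3,P}(Y)X) / h(J_{p+2,P}(Y)X, J_{p+2,P}(Y)X) = α(y). In particular this ratio is independent of the choices of h, a, b, c, d, and depends only on the y-coordinate of P. -/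
lemma sgl_ne {p : ℕ} {j m : Fin (2*p+6)} (hne : m ≠ j) :
    (Pi.single j (1:ℝ) : Vp p) m = 0 := Pi.single_eq_of_ne hne 1

lemma gP_e_ixb (f : ℝ → ℝ) (P u : Vp p) :
    gP p f P u (Pi.single (ixb p) 1) = u (ix p) := by
  simp only [gP]
  rw [Pi.single_eq_same,
    sgl_ne (m := ix p) (j := ixb p) (Fin.ne_of_val_ne (by simp only [ix, iy, iz, ixb, iyb, izb]; omega)),
    sgl_ne (m := iy p) (j := ixb p) (Fin.ne_of_val_ne (by simp only [ix, iy, iz, ixb, iyb, izb]; omega)),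
    sgl_ne (m := iyb p) (j := ixb p) (Fin.ne_of_val_ne (by simp only [ix, iy, iz, ixb, iyb, izb]; omega)),
    Finset.sum_eq_zero (fun i _ => by
      rw [sgl_ne (m := izb p i) (j := ixb p) (Fin.ne_of_val_ne (by have := i.2; simp only [ix, iy, iz, ixb, iyb, izb]; omega)),
        sgl_ne (m := iz p i) (j := ixb p) (Fin.ne_of_val_ne (by have := i.2; simp only [ix, iy, iz, ixb, iyb, izb]; omega))]
      ring)]
  ring

lemma gP_e_iyb (f : ℝ → ℝ) (P u : Vp p) :
    gP p f P u (Pi.single (iyb p) 1) = u (iy p) := by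
  simp only [gP]
  rw [Pi.single_eq_same,
    sgl_ne (m := ix p) (j := iyb p) (Fin.ne_of_val_ne (by simp only [ix, iy, iz, ixb, iyb, izb]; omega)),
    sgl_ne (m := iy p) (j := iyb p) (Fin.ne_of_val_ne (by simp only [ix, iy, iz, ixb, iyb, izb]; omega)),
    sgl_ne (m := ixb p) (j := iyb p) (Fin.ne_of_val_ne (by simp only [ix, iy, iz, ixb, iyb, izb]; omega)),
    Finset.sum_eq_zero (fun i _ => by
      rw [sgl_ne (m := izb p i) (j := iyb p) (Fin.ne_of_val_ne (by have := i.2; simp only [ix, iy, iz, ixb, iyb, izb]; omega)),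
        sgl_ne (m := iz p i) (j := iyb p) (Fin.ne_of_val_ne (by have := i.2; simp only [ix, iy, iz, ixb, iyb, izb]; omega))]
      ring)]
  ring

lemma gP_e_ix (f : ℝ → ℝ) (P u : Vp p) :
    gP p f P u (Pi.single (ix p) 1) = u (ixb p) - 2 * FF p f P * u (ix p) := by
  simp only [gP]
  rw [Pi.single_eq_same,
    sgl_ne (m := iy p) (j := ix p) (Fin.ne_of_val_ne (by simp only [ix, iy, iz, ixb, iyb, izb]; omega)),
    sgl_ne (m := ixb p) (j := ix p) (Fin.ne_of_val_ne (by simp only [ix, iy, iz, ixb, iyb, izb]; omega)),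
    sgl_ne (m := iyb p) (j := ix p) (Fin.ne_of_val_ne (by simp only [ix, iy, iz, ixb, iyb, izb]; omega)),
    Finset.sum_eq_zero (fun i _ => by
      rw [sgl_ne (m := izb p i) (j := ix p) (Fin.ne_of_val_ne (by have := i.2; simp only [ix, iy, iz, ixb, iyb, izb]; omega)),
        sgl_ne (m := iz p i) (j := ix p) (Fin.ne_of_val_ne (by have := i.2; simp only [ix, iy, iz, ixb, iyb, izb]; omega))]
      ring)]
  ring

lemma gP_e_iy (f : ℝ → ℝ) (P u : Vp p) :
    gP p f P u (Pi.single (iy p) 1) = u (iyb p) := by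
  simp only [gP]
  rw [Pi.single_eq_same,
    sgl_ne (m := ix p) (j := iy p) (Fin.ne_of_val_ne (by simp only [ix, iy, iz, ixb, iyb, izb]; omega)),
    sgl_ne (m := ixb p) (j := iy p) (Fin.ne_of_val_ne (by simp only [ix, iy, iz, ixb, iyb, izb]; omega)),
    sgl_ne (m := iyb p) (j := iy p) (Fin.ne_of_val_ne (by simp only [ix, iy, iz, ixb, iyb, izb]; omega)),
    Finset.sum_eq_zero (fun i _ => by
      rw [sgl_ne (m := izb p i) (j := iy p) (Fin.ne_of_val_ne (by have := i.2; simp only [ix, iy, iz, ixb, iyb, izb]; omega)),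
        sgl_ne (m := iz p i) (j := iy p) (Fin.ne_of_val_ne (by have := i.2; simp only [ix, iy, iz, ixb, iyb, izb]; omega))]
      ring)]
  ring

lemma gP_e_izb (f : ℝ → ℝ) (P u : Vp p) (i₀ : Fin (p+1)) :
    gP p f P u (Pi.single (izb p i₀) 1) = u (iz p i₀) := by
  simp only [gP]
  rw [sgl_ne (m := ix p) (j := izb p i₀) (Fin.ne_of_val_ne (by have := i₀.2; simp only [ix, iy, iz, ixb, iyb, izb]; omega)),
    sgl_ne (m := iy p) (j := izb p i₀) (Fin.ne_of_val_ne (by have := i₀.2; simp only [ix, iy, iz, ixb, iyb, izb]; omega)),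
    sgl_ne (m := ixb p) (j := izb p i₀) (Fin.ne_of_val_ne (by have := i₀.2; simp only [ix, iy, iz, ixb, iyb, izb]; omega)),
    sgl_ne (m := iyb p) (j := izb p i₀) (Fin.ne_of_val_ne (by have := i₀.2; simp only [ix, iy, iz, ixb, iyb, izb]; omega)),
    Finset.sum_eq_single i₀ (fun i _ hne => by
      have hv : i.1 ≠ i₀.1 := fun hh => hne (Fin.ext hh)
      rw [sgl_ne (m := izb p i) (j := izb p i₀) (Fin.ne_of_val_ne (by have := i.2; have := i₀.2; simp only [ix, iy, iz, ixb, iyb, izb]; omega)),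
        sgl_ne (m := iz p i) (j := izb p i₀) (Fin.ne_of_val_ne (by have := i.2; have := i₀.2; simp only [ix, iy, iz, ixb, iyb, izb]; omega))]
      ring)
      (fun hni => absurd (Finset.mem_univ i₀) hni),
    Pi.single_eq_same,
    sgl_ne (m := iz p i₀) (j := izb p i₀) (Fin.ne_of_val_ne (by have := i₀.2; simp only [ix, iy, iz, ixb, iyb, izb]; omega))]
  ring

lemma gP_e_iz (f : ℝ → ℝ) (P u : Vp p) (i₀ : Fin (p+1)) :
    gP p f P u (Pi.single (iz p i₀) 1) = u (izb p i₀) := by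
  simp only [gP]
  rw [sgl_ne (m := ix p) (j := iz p i₀) (Fin.ne_of_val_ne (by have := i₀.2; simp only [ix, iy, iz, ixb, iyb, izb]; omega)),
    sgl_ne (m := iy p) (j := iz p i₀) (Fin.ne_of_val_ne (by have := i₀.2; simp only [ix, iy, iz, ixb, iyb, izb]; omega)),
    sgl_ne (m := ixb p) (j := iz p i₀) (Fin.ne_of_val_ne (by have := i₀.2; simp only [ix, iy, iz, ixb, iyb, izb]; omega)),
    sgl_ne (m := iyb p) (j := iz p i₀) (Fin.ne_of_val_ne (by have := i₀.2; simp only [ix, iy, iz, ixb, iyb, izb]; omega)),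
    Finset.sum_eq_single i₀ (fun i _ hne => by
      have hv : i.1 ≠ i₀.1 := fun hh => hne (Fin.ext hh)
      rw [sgl_ne (m := izb p i) (j := iz p i₀) (Fin.ne_of_val_ne (by have := i.2; have := i₀.2; simp only [ix, iy, iz, ixb, iyb, izb]; omega)),
        sgl_ne (m := iz p i) (j := iz p i₀) (Fin.ne_of_val_ne (by have := i.2; have := i₀.2; simp only [ix, iy, iz, ixb, iyb, izb]; omega))]
      ring)
      (fun hni => absurd (Finset.mem_univ i₀) hni),
    Pi.single_eq_same,
    sgl_ne (m := izb p i₀) (j := iz p i₀) (Fin.ne_of_val_ne (by have := i₀.2; simp only [ix, iy, iz, ixb, iyb, izb]; omega))]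
  ring

lemma gP_sub (p : ℕ) (f : ℝ → ℝ) (P u w ξ : Vp p) :
    gP p f P (u - w) ξ = gP p f P u ξ - gP p f P w ξ := by
  simp only [gP, Pi.sub_apply]
  rw [show (∑ i : Fin (p+1), ((u (iz p i) - w (iz p i)) * ξ (izb p i)
      + (u (izb p i) - w (izb p i)) * ξ (iz p i)))
    = ∑ i : Fin (p+1), ((u (iz p i) * ξ (izb p i) + u (izb p i) * ξ (iz p i))
      - (w (iz p i) * ξ (izb p i) + w (izb p i) * ξ (iz p i)))
    from Finset.sum_congr rfl (fun i _ => by ring), Finset.sum_sub_distrib]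
  ring

lemma gP_nondeg (p : ℕ) (f : ℝ → ℝ) (P u : Vp p)
    (hu : ∀ ξ, gP p f P u ξ = 0) : u = 0 := by
  have hix : u (ix p) = 0 := by rw [← gP_e_ixb f P u]; exact hu _
  have hiy : u (iy p) = 0 := by rw [← gP_e_iyb f P u]; exact hu _
  have hiz : ∀ i, u (iz p i) = 0 := fun i => by rw [← gP_e_izb f P u i]; exact hu _
  have hixb : u (ixb p) = 0 := by
    have := hu (Pi.single (ix p) 1); rw [gP_e_ix, hix] at this; linarith
  have hiyb : u (iyb p) = 0 := by rw [← gP_e_iy f P u]; exact hu _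
  have hizb : ∀ i, u (izb p i) = 0 := fun i => by rw [← gP_e_iz f P u i]; exact hu _
  funext j
  have hj := j.2
  show u j = 0
  by_cases h0 : j.1 = 0
  · rw [show j = ix p from Fin.ext (by simp only [ix]; omega)]; exact hix
  by_cases h1 : j.1 = 1
  · rw [show j = iy p from Fin.ext (by simp only [iy]; omega)]; exact hiy
  by_cases h2 : j.1 ≤ p + 2
  · rw [show j = iz p ⟨j.1 - 2, by omega⟩ from Fin.ext (by simp only [iz]; omega)]
    exact hiz _
  by_cases h3 : j.1 = p + 3
  · rw [show j = ixb p from Fin.ext (by simp only [ixb]; omega)]; exact hixb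
  by_cases h4 : j.1 = p + 4
  · rw [show j = iyb p from Fin.ext (by simp only [iyb]; omega)]; exact hiyb
  · rw [show j = izb p ⟨j.1 - (p+5), by omega⟩ from Fin.ext (by simp only [izb]; omega)]
    exact hizb _

lemma itd_pow (m : ℕ) : ∀ n : ℕ, iteratedDeriv n (fun t : ℝ => t ^ m)
    = fun t : ℝ => (m.descFactorial n : ℝ) * t ^ (m - n) := by
  intro n
  induction n with
  | zero => funext t; simp
  | succ n ih =>
      funext t
      rw [iteratedDeriv_succ, ih, deriv_const_mul _ (differentiableAt_pow (m - n)), deriv_pow_field]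
      push_cast [Nat.descFactorial_succ]
      have h : m - n - 1 = m - (n + 1) := by omega
      rw [h]; ring

lemma itd_pow_zero {m n : ℕ} (h : m < n) (t : ℝ) :
    iteratedDeriv n (fun t : ℝ => t ^ m) t = 0 := by
  rw [itd_pow m n]
  simp [Nat.descFactorial_eq_zero_iff_lt.2 h]

lemma nR_eval (p k : ℕ) (hk : p < k) (f : ℝ → ℝ) (P : Vp p) (a b c d : ℝ)
    (X Y ξ : Vp p)
    (hXx : X (ix p) = a) (hXy : X (iy p) = b)
    (hYx : Y (ix p) = c) (hYy : Y (iy p) = d) (hYz : ∀ i, Y (iz p i) = 0) :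
    nR p f k P X Y Y ξ (fun _ => Y)
      = (a*d - b*c) * d^k * iteratedDeriv (k+2) f (P (iy p))
          * (d * ξ (ix p) - c * ξ (iy p)) := by
  have hz2 : ∀ i : Fin (p+1),
      iteratedDeriv (k+2) (fun t : ℝ => t^(i.1+1)) (P (iy p)) = 0 :=
    fun i => itd_pow_zero (by have := i.2; omega) _
  have hz1 : ∀ i : Fin (p+1),
      iteratedDeriv (k+1) (fun t : ℝ => t^(i.1+1)) (P (iy p)) = 0 :=
    fun i => itd_pow_zero (by have := i.2; omega) _
  simp only [nR, wdg, hz1, hz2, hYy, hYz, zero_mul, mul_zero, Finset.sum_const_zero,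
    add_zero, zero_add, sub_zero, Finset.prod_const, Finset.card_univ, Fintype.card_fin]
  rw [hXx, hXy, hYx]
  ring

lemma gP_W (p : ℕ) (f : ℝ → ℝ) (P : Vp p) (s c d : ℝ) (ξ : Vp p) :
    gP p f P (s • (d • (Pi.single (ixb p) 1 : Vp p) - c • (Pi.single (iyb p) 1 : Vp p))) ξ
      = s * (d * ξ (ix p) - c * ξ (iy p)) := by
  simp only [gP, Pi.smul_apply, Pi.sub_apply, smul_eq_mul]
  rw [Pi.single_eq_same,
    Pi.single_eq_same,
    sgl_ne (m := ix p) (j := ixb p) (Fin.ne_of_val_ne (by simp only [ix, ixb]; omega)),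
    sgl_ne (m := ix p) (j := iyb p) (Fin.ne_of_val_ne (by simp only [ix, iyb]; omega)),
    sgl_ne (m := iy p) (j := ixb p) (Fin.ne_of_val_ne (by simp only [iy, ixb]; omega)),
    sgl_ne (m := iy p) (j := iyb p) (Fin.ne_of_val_ne (by simp only [iy, iyb]; omega)),
    sgl_ne (m := ixb p) (j := iyb p) (Fin.ne_of_val_ne (by simp only [ixb, iyb]; omega)),
    sgl_ne (m := iyb p) (j := ixb p) (Fin.ne_of_val_ne (by simp only [iyb, ixb]; omega)),
    Finset.sum_eq_zero (fun i _ => by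
      rw [sgl_ne (m := iz p i) (j := ixb p)
            (Fin.ne_of_val_ne (by have := i.2; simp only [iz, ixb]; omega)),
        sgl_ne (m := iz p i) (j := iyb p)
            (Fin.ne_of_val_ne (by have := i.2; simp only [iz, iyb]; omega)),
        sgl_ne (m := izb p i) (j := ixb p)
            (Fin.ne_of_val_ne (by have := i.2; simp only [izb, ixb]; omega)),
        sgl_ne (m := izb p i) (j := iyb p)
            (Fin.ne_of_val_ne (by have := i.2; simp only [izb, iyb]; omega))]
      ring)]
  ring

lemma W_eval (p : ℕ) (c d : ℝ) :
    (d • (Pi.single (ixb p) 1 : Vp p) - c • (Pi.single (iyb p) 1 : Vp p)) (ixb p) = d := by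
  simp only [Pi.sub_apply, Pi.smul_apply, smul_eq_mul]
  rw [Pi.single_eq_same,
    sgl_ne (m := ixb p) (j := iyb p) (Fin.ne_of_val_ne (by simp only [ixb, iyb]; omega))]
  ring

lemma XY_eval (p : ℕ) (r s : ℝ) :
    ((r • (Pi.single (ix p) 1 : Vp p) + s • (Pi.single (iy p) 1 : Vp p)) (ix p) = r)
    ∧ ((r • (Pi.single (ix p) 1 : Vp p) + s • (Pi.single (iy p) 1 : Vp p)) (iy p) = s)
    ∧ ∀ i, (r • (Pi.single (ix p) 1 : Vp p) + s • (Pi.single (iy p) 1 : Vp p)) (iz p i) = 0 := by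
  refine ⟨?_, ?_, fun i => ?_⟩ <;>
    simp only [Pi.add_apply, Pi.smul_apply, smul_eq_mul]
  · rw [Pi.single_eq_same,
      sgl_ne (m := ix p) (j := iy p) (Fin.ne_of_val_ne (by simp only [ix, iy]; omega))]
    ring
  · rw [Pi.single_eq_same,
      sgl_ne (m := iy p) (j := ix p) (Fin.ne_of_val_ne (by simp only [iy, ix]; omega))]
    ring
  · rw [sgl_ne (m := iz p i) (j := ix p)
        (Fin.ne_of_val_ne (by have := i.2; simp only [iz, ix]; omega)),
      sgl_ne (m := iz p i) (j := iy p)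
        (Fin.ne_of_val_ne (by have := i.2; simp only [iz, iy]; omega))]
    ring

lemma op_eq (p k : ℕ) (hk : p < k) (f : ℝ → ℝ) (P : Vp p) (a b c d : ℝ)
    (X Y : Vp p)
    (hX : X = a • (Pi.single (ix p) 1 : Vp p) + b • (Pi.single (iy p) 1 : Vp p))
    (hY : Y = c • (Pi.single (ix p) 1 : Vp p) + d • (Pi.single (iy p) 1 : Vp p))
    (v : Vp p)
    (hv : ∀ ξ, gP p f P v ξ = nR p f k P X Y Y ξ (fun _ => Y)) :
    v = ((a*d - b*c) * d^k * iteratedDeriv (k+2) f (P (iy p)))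
        • (d • (Pi.single (ixb p) 1 : Vp p) - c • (Pi.single (iyb p) 1 : Vp p)) := by
  have hXx := (XY_eval p a b).1; rw [← hX] at hXx
  have hXy := (XY_eval p a b).2.1; rw [← hX] at hXy
  have hYx := (XY_eval p c d).1; rw [← hY] at hYx
  have hYy := (XY_eval p c d).2.1; rw [← hY] at hYy
  have hYz : ∀ i, Y (iz p i) = 0 := fun i => by rw [hY]; exact (XY_eval p c d).2.2 i
  refine sub_eq_zero.mp (gP_nondeg p f P _ (fun ξ => ?_))
  rw [gP_sub, hv ξ, gP_W, nR_eval p k hk f P a b c d X Y ξ hXx hXy hYx hYy hYz]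
  ring

/-- let h be any positive definite inner product on ℝ^m, let P have
y-coordinate y with f^{(p+4)}(y) ≠ 0, and let X = a∂x + b∂y, Y = c∂x + d∂y with
J_{p+1,P}(Y)X ≠ 0, where J_{k,P}(Y)X = ∇^k𝓡_P(X,Y;Y,…,Y)Y and ∇^k𝓡_P is the (unique)
operator with g_P(∇^k𝓡_P(ξ₁,ξ₂;η⃗)ξ₃, ξ₄) = ∇^kR_P(ξ₁,ξ₂,ξ₃,ξ₄;η⃗).  Then
h(J_{p+1,P}(Y)X, J_{p+3,P}(Y)X) / h(J_{p+2,P}(Y)X, J_{p+2,P}(Y)X)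
  = f^{(p+3)}(y)·f^{(p+5)}(y) / (f^{(p+4)}(y))². -/
theorem Jacobi_ratio_is_alpha (p : ℕ) (f : ℝ → ℝ) (hf : ContDiff ℝ (⊤ : ℕ∞) f)
    (h : Vp p →ₗ[ℝ] Vp p →ₗ[ℝ] ℝ)
    (hsym : ∀ u v : Vp p, h u v = h v u)
    (hpos : ∀ v : Vp p, v ≠ 0 → 0 < h v v)
    (P : Vp p) (hf4 : iteratedDeriv (p+4) f (P (iy p)) ≠ 0)
    (a b c d : ℝ) (X Y : Vp p)
    (hX : X = a • (Pi.single (ix p) 1 : Vp p) + b • (Pi.single (iy p) 1 : Vp p))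
    (hY : Y = c • (Pi.single (ix p) 1 : Vp p) + d • (Pi.single (iy p) 1 : Vp p))
    (op1 : Vp p → Vp p → (Fin (p+1) → Vp p) → Vp p → Vp p)
    (op2 : Vp p → Vp p → (Fin (p+2) → Vp p) → Vp p → Vp p)
    (op3 : Vp p → Vp p → (Fin (p+3) → Vp p) → Vp p → Vp p)
    (hop1 : ∀ (ξ₁ ξ₂ : Vp p) (η : Fin (p+1) → Vp p) (ξ₃ ξ₄ : Vp p),
      gP p f P (op1 ξ₁ ξ₂ η ξ₃) ξ₄ = nR p f (p+1) P ξ₁ ξ₂ ξ₃ ξ₄ η)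
    (hop2 : ∀ (ξ₁ ξ₂ : Vp p) (η : Fin (p+2) → Vp p) (ξ₃ ξ₄ : Vp p),
      gP p f P (op2 ξ₁ ξ₂ η ξ₃) ξ₄ = nR p f (p+2) P ξ₁ ξ₂ ξ₃ ξ₄ η)
    (hop3 : ∀ (ξ₁ ξ₂ : Vp p) (η : Fin (p+3) → Vp p) (ξ₃ ξ₄ : Vp p),
      gP p f P (op3 ξ₁ ξ₂ η ξ₃) ξ₄ = nR p f (p+3) P ξ₁ ξ₂ ξ₃ ξ₄ η)
    (hne : op1 X Y (fun _ => Y) Y ≠ 0) :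
    h (op1 X Y (fun _ => Y) Y) (op3 X Y (fun _ => Y) Y)
      / h (op2 X Y (fun _ => Y) Y) (op2 X Y (fun _ => Y) Y)
    = iteratedDeriv (p+3) f (P (iy p)) * iteratedDeriv (p+5) f (P (iy p))
        / (iteratedDeriv (p+4) f (P (iy p)))^2 := by
  have key1 := op_eq p (p+1) (by omega) f P a b c d X Y hX hY _ (fun ξ => hop1 X Y _ Y ξ)
  have key2 := op_eq p (p+2) (by omega) f P a b c d X Y hX hY _ (fun ξ => hop2 X Y _ Y ξ)
  have key3 := op_eq p (p+3) (by omega) f P a b c d X Y hX hY _ (fun ξ => hop3 X Y _ Y ξ)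
  set W : Vp p := d • (Pi.single (ixb p) 1 : Vp p) - c • (Pi.single (iyb p) 1 : Vp p) with hWdef
  set f3 := iteratedDeriv (p+3) f (P (iy p))
  set f4 := iteratedDeriv (p+4) f (P (iy p))
  set f5 := iteratedDeriv (p+5) f (P (iy p))
  have hs1 : (a*d - b*c) * d^(p+1) * f3 ≠ 0 := by
    intro h0
    exact hne (by rw [key1, h0, zero_smul])
  obtain ⟨hwd, hf3⟩ := mul_ne_zero_iff.mp hs1
  obtain ⟨hw, hdp⟩ := mul_ne_zero_iff.mp hwd
  have hd : d ≠ 0 := fun h0 => hdp (by rw [h0]; exact zero_pow (by omega))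
  have hWne : W ≠ 0 := by
    intro h0
    have := W_eval p c d
    rw [← hWdef, h0] at this
    exact hd ((Pi.zero_apply _).symm.trans this).symm
  have hWW : 0 < h W W := hpos W hWne
  rw [key1, key2, key3]
  simp only [map_smul, LinearMap.smul_apply, smul_eq_mul]
  have hs2 : (a*d - b*c) * d^(p+2) * f4 ≠ 0 :=
    mul_ne_zero (mul_ne_zero hw (pow_ne_zero _ hd)) hf4
  rw [div_eq_div_iff
      (by
        have := hWW.ne'
        positivity)
      (pow_ne_zero 2 hf4)]
  ring
end
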